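/- arXiv:1406.0265 — 3 statements merged into one kernel-verified Lean document; each statement's English description precedes it below -/
import Mathlib

section
/- For 0 < α < 1/2, the anyon filling factor F(f) = (1-αf)^α (1+(1-α)f)^{1-α} attains its maximum on [0, 1/α] at f = (1-2α)/(α(1-α)), with maximum value (1/α - 1)^{1-2α}, which is strictly greater than 1. -/
/-- For `0 < α < 1/2`, the anyon filling factor attains its maximum on `[0,1/α]`
at `f = (1-2α)/(α(1-α))`, with maximum value `(1/α - 1)^(1-2α) > 1`. -/
theorem filling_factor_max_small_alpha (α : ℝ) (hα0 : 0 < α) (hα1 : α < 1/2) :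
    let F : ℝ → ℝ := fun f => (1 - α * f) ^ α * (1 + (1 - α) * f) ^ (1 - α)
    let f₀ : ℝ := (1 - 2 * α) / (α * (1 - α))
    f₀ ∈ Set.Icc 0 (1 / α) ∧
    F f₀ = (1 / α - 1) ^ (1 - 2 * α) ∧
    (∀ f ∈ Set.Icc 0 (1 / α), F f ≤ F f₀) ∧
    1 < F f₀ := by
  intro F f₀
  have h1 : (0:ℝ) < 1 - α := by linarith
  have h2 : (0:ℝ) < 1 - 2*α := by linarith
  have hprod : 0 < α * (1 - α) := by positivity
  have hne : α ≠ 0 := ne_of_gt hα0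
  have hne1 : (1:ℝ) - α ≠ 0 := ne_of_gt h1
  have hA : 1 - α * f₀ = α / (1 - α) := by
    show 1 - α * ((1 - 2 * α) / (α * (1 - α))) = α / (1 - α)
    field_simp; ring
  have hB : 1 + (1 - α) * f₀ = (1 - α) / α := by
    show 1 + (1 - α) * ((1 - 2 * α) / (α * (1 - α))) = (1 - α) / α
    field_simp; ring
  have hratio : (0:ℝ) < (1-α)/α := by positivity
  have hrr : (1:ℝ)/α - 1 = (1-α)/α := by field_simp
  have hFf0 : F f₀ = ((1-α)/α) ^ (1 - 2*α) := by
    show (1 - α * f₀) ^ α * (1 + (1 - α) * f₀) ^ (1 - α) = _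
    rw [hA, hB]
    have hinv : α / (1-α) = ((1-α)/α)⁻¹ := by field_simp
    rw [hinv, Real.inv_rpow hratio.le, ← Real.rpow_neg hratio.le,
      ← Real.rpow_add hratio]
    ring_nf
  have hmem : f₀ ∈ Set.Icc 0 (1 / α) := by
    constructor
    · show (0:ℝ) ≤ (1 - 2 * α) / (α * (1 - α))
      positivity
    · show (1 - 2 * α) / (α * (1 - α)) ≤ 1 / α
      rw [div_le_div_iff₀ hprod hα0]
      nlinarith
  have hFpos : 0 < F f₀ := by rw [hFf0]; positivity
  refine ⟨hmem, by rw [hFf0, hrr], ?_, ?_⟩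
  · intro f hf
    obtain ⟨hf0, hf1⟩ := hf
    have hx0 : (0:ℝ) ≤ 1 - α * f := by
      have h : α * (1/α) = 1 := by field_simp
      nlinarith [mul_le_mul_of_nonneg_left hf1 hα0.le]
    have hy0 : (0:ℝ) ≤ 1 + (1 - α) * f := by nlinarith
    set x : ℝ := (1 - α * f) * ((1 - α) / α) with hxdef
    set y : ℝ := (1 + (1 - α) * f) * (α / (1 - α)) with hydef
    have hx : 0 ≤ x := by positivity
    have hy : 0 ≤ y := by positivity
    have hsum : α * x + (1 - α) * y = 1 := by
      rw [hxdef, hydef]; field_simp; ring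
    have hgm : x ^ α * y ^ (1 - α) ≤ 1 := by
      calc x ^ α * y ^ (1 - α) ≤ α * x + (1 - α) * y :=
            Real.geom_mean_le_arith_mean2_weighted hα0.le h1.le hx hy (by ring)
        _ = 1 := hsum
    have hfx : 1 - α * f = x * (α / (1 - α)) := by
      rw [hxdef]; field_simp
    have hfy : 1 + (1 - α) * f = y * ((1 - α) / α) := by
      rw [hydef]; field_simp
    have hexp : F f = (x ^ α * y ^ (1 - α)) * F f₀ := by
      show (1 - α * f) ^ α * (1 + (1 - α) * f) ^ (1 - α) = _
      rw [hfx, hfy, Real.mul_rpow hx (by positivity),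
        Real.mul_rpow hy (by positivity)]
      have : F f₀ = (α / (1 - α)) ^ α * ((1 - α) / α) ^ (1 - α) := by
        show (1 - α * f₀) ^ α * (1 + (1 - α) * f₀) ^ (1 - α) = _
        rw [hA, hB]
      rw [this]; ring
    rw [hexp]
    nlinarith [mul_le_mul_of_nonneg_right hgm hFpos.le]
  · rw [hFf0]
    have h1lt : 1 < (1-α)/α := by
      rw [lt_div_iff₀ hα0]; linarith
    exact Real.one_lt_rpow_iff_of_pos (by positivity) |>.mpr (Or.inl ⟨h1lt, h2⟩)
end

section
/- For 0 < α < 1, the filling factor F(f) = (1-αf)^α (1+(1-α)f)^{1-α} is concave on [0, 1/α]. -/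
/-- Concavity inequality for the weighted geometric mean of two pairs. -/
lemma geom_mean_concave_aux (α : ℝ) (hα0 : 0 < α) (hα1 : α < 1)
    {a b G1 G2 H1 H2 : ℝ} (ha : 0 ≤ a) (hb : 0 ≤ b) (hab : a + b = 1)
    (hG1 : 0 ≤ G1) (hG2 : 0 ≤ G2) (hH1 : 0 ≤ H1) (hH2 : 0 ≤ H2) :
    a * (G1 ^ α * H1 ^ (1 - α)) + b * (G2 ^ α * H2 ^ (1 - α)) ≤
      (a * G1 + b * G2) ^ α * (a * H1 + b * H2) ^ (1 - α) := by
  set S := a * G1 + b * G2 with hS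
  set T := a * H1 + b * H2 with hT
  have hSnn : 0 ≤ S := by positivity
  have hTnn : 0 ≤ T := by positivity
  have hα1' : 0 < 1 - α := by linarith
  rcases eq_or_lt_of_le hSnn with hS0 | hSpos
  · -- S = 0, so a*G1 = 0 and b*G2 = 0
    have h1 : a * G1 = 0 := by nlinarith [mul_nonneg ha hG1, mul_nonneg hb hG2]
    have h2 : b * G2 = 0 := by nlinarith [mul_nonneg ha hG1, mul_nonneg hb hG2]
    have e1 : a * (G1 ^ α * H1 ^ (1 - α)) = 0 := by
      rcases mul_eq_zero.1 h1 with h | h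
      · simp [h]
      · simp [h, Real.zero_rpow hα0.ne']
    have e2 : b * (G2 ^ α * H2 ^ (1 - α)) = 0 := by
      rcases mul_eq_zero.1 h2 with h | h
      · simp [h]
      · simp [h, Real.zero_rpow hα0.ne']
    rw [e1, e2, ← hS0, Real.zero_rpow hα0.ne']
    simp
  rcases eq_or_lt_of_le hTnn with hT0 | hTpos
  · have h1 : a * H1 = 0 := by nlinarith [mul_nonneg ha hH1, mul_nonneg hb hH2]
    have h2 : b * H2 = 0 := by nlinarith [mul_nonneg ha hH1, mul_nonneg hb hH2]
    have e1 : a * (G1 ^ α * H1 ^ (1 - α)) = 0 := by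
      rcases mul_eq_zero.1 h1 with h | h
      · simp [h]
      · simp [h, Real.zero_rpow hα1'.ne']
    have e2 : b * (G2 ^ α * H2 ^ (1 - α)) = 0 := by
      rcases mul_eq_zero.1 h2 with h | h
      · simp [h]
      · simp [h, Real.zero_rpow hα1'.ne']
    rw [e1, e2, ← hT0, Real.zero_rpow hα1'.ne']
    simp
  -- main case: S, T > 0
  have hR : 0 < S ^ α * T ^ (1 - α) := by positivity
  rw [← div_le_one hR]
  have key : ∀ G H : ℝ, 0 ≤ G → 0 ≤ H →
      G ^ α * H ^ (1 - α) / (S ^ α * T ^ (1 - α)) ≤ α * (G / S) + (1 - α) * (H / T) := by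
    intro G H hG hH
    have : G ^ α * H ^ (1 - α) / (S ^ α * T ^ (1 - α)) = (G / S) ^ α * (H / T) ^ (1 - α) := by
      rw [Real.div_rpow hG hSnn, Real.div_rpow hH hTnn]
      field_simp
    rw [this]
    exact Real.geom_mean_le_arith_mean2_weighted hα0.le hα1'.le
      (div_nonneg hG hSnn) (div_nonneg hH hTnn) (by ring)
  have k1 := key G1 H1 hG1 hH1
  have k2 := key G2 H2 hG2 hH2
  have : (a * (G1 ^ α * H1 ^ (1 - α)) + b * (G2 ^ α * H2 ^ (1 - α))) / (S ^ α * T ^ (1 - α)) ≤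
      a * (α * (G1 / S) + (1 - α) * (H1 / T)) + b * (α * (G2 / S) + (1 - α) * (H2 / T)) := by
    calc (a * (G1 ^ α * H1 ^ (1 - α)) + b * (G2 ^ α * H2 ^ (1 - α))) / (S ^ α * T ^ (1 - α))
        = a * (G1 ^ α * H1 ^ (1 - α) / (S ^ α * T ^ (1 - α)))
          + b * (G2 ^ α * H2 ^ (1 - α) / (S ^ α * T ^ (1 - α))) := by ring
      _ ≤ _ := add_le_add (mul_le_mul_of_nonneg_left k1 ha) (mul_le_mul_of_nonneg_left k2 hb)
  refine this.trans (le_of_eq ?_)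
  field_simp
  ring
  
/-- For `0 < α < 1`, the filling factor `F` is concave on `[0, 1/α]`. -/
theorem filling_factor_concave (α : ℝ) (hα0 : 0 < α) (hα1 : α < 1) :
    ConcaveOn ℝ (Set.Icc 0 (1 / α))
      (fun f : ℝ => (1 - α * f) ^ α * (1 + (1 - α) * f) ^ (1 - α)) := by
  refine ⟨convex_Icc _ _, ?_⟩
  intro x hx y hy a b ha hb hab
  simp only [Set.mem_Icc] at hx hy
  have hG1 : 0 ≤ 1 - α * x := by
    have := (le_div_iff₀ hα0).1 hx.2; linarith [mul_comm α x ▸ this]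
  have hG2 : 0 ≤ 1 - α * y := by
    have := (le_div_iff₀ hα0).1 hy.2; linarith [mul_comm α y ▸ this]
  have hH1 : 0 ≤ 1 + (1 - α) * x := by nlinarith [hx.1]
  have hH2 : 0 ≤ 1 + (1 - α) * y := by nlinarith [hy.1]
  have eG : 1 - α * (a * x + b * y) = a * (1 - α * x) + b * (1 - α * y) := by
    have : a + b = 1 := hab; ring_nf; nlinarith [this]
  have eH : 1 + (1 - α) * (a * x + b * y) = a * (1 + (1 - α) * x) + b * (1 + (1 - α) * y) := by
    have : a + b = 1 := hab; ring_nf; nlinarith [this]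
  simp only [smul_eq_mul]
  rw [eG, eH]
  exact geom_mean_concave_aux α hα0 hα1 ha hb hab hG1 hG2 hH1 hH2
end

section
/- For 0 < α < 1, let F_j(y) = (1-αy)(1/j+1-αy)^{α-1}(1+(1-α)y)^{1-α}. If y ∈ [0, 1/α] satisfies 1 - αy ≥ 2/a for integers j ≥ a ≥ 1, then |F_j(y) - F_a(y)| ≤ C a^{-α} for a constant C depending only on α. -/
private lemma bern_neg {α x : ℝ} (hα0 : 0 < α) (hα1 : α < 1) (hx : 0 ≤ x) :
    1 + (α - 1) * x ≤ (1 + x) ^ (α - 1) := by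
  have hx1 : (0:ℝ) < 1 + x := by linarith
  rcases le_or_gt (1 + (α - 1) * x) 0 with h | h
  · exact h.trans (Real.rpow_pos_of_pos hx1 _).le
  · have hB : (1 + x) ^ (1 - α) ≤ 1 + (1 - α) * x :=
      rpow_one_add_le_one_add_mul_self (by linarith) (by linarith) (by linarith)
    have h2 : (1 + (α - 1) * x) * (1 + x) ^ (1 - α) ≤ 1 := by
      calc (1 + (α - 1) * x) * (1 + x) ^ (1 - α)
          ≤ (1 + (α - 1) * x) * (1 + (1 - α) * x) := by
            exact mul_le_mul_of_nonneg_left hB h.le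
        _ = 1 - ((1 - α) * x) ^ 2 := by ring
        _ ≤ 1 := by nlinarith [sq_nonneg ((1 - α) * x)]
    have hpos : 0 < (1 + x) ^ (1 - α) := Real.rpow_pos_of_pos hx1 _
    have h3 : (1 + x) ^ (α - 1) = ((1 + x) ^ (1 - α))⁻¹ := by
      rw [← Real.rpow_neg hx1.le]; ring_nf
    rw [h3, inv_eq_one_div, le_div_iff₀ hpos]
    exact h2

private lemma key_mvt {t h α : ℝ} (ht : 0 < t) (hh : 0 ≤ h) (hα0 : 0 < α) (hα1 : α < 1) :
    t ^ (α - 1) - (t + h) ^ (α - 1) ≤ (1 - α) * h * t ^ (α - 2) := by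
  have hx : 0 ≤ h / t := div_nonneg hh ht.le
  have hsplit : (t + h) ^ (α - 1) = t ^ (α - 1) * (1 + h / t) ^ (α - 1) := by
    rw [← Real.mul_rpow ht.le (by linarith : (0:ℝ) ≤ 1 + h / t)]
    rw [mul_add, mul_one, mul_div_cancel₀ _ ht.ne']
  have hb := bern_neg hα0 hα1 hx
  have htpow : 0 < t ^ (α - 1) := Real.rpow_pos_of_pos ht _
  have h1 : t ^ (α - 1) - (t + h) ^ (α - 1)
      ≤ t ^ (α - 1) * ((1 - α) * (h / t)) := by
    rw [hsplit]
    have := mul_le_mul_of_nonneg_left hb htpow.le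
    nlinarith
  refine h1.trans_eq ?_
  have : t ^ (α - 2) = t ^ (α - 1) * t⁻¹ := by
    rw [← Real.rpow_neg_one t, ← Real.rpow_add ht]; ring_nf
  rw [this]; field_simp

set_option maxHeartbeats 1000000 in
/-- For `0 < α < 1` there is a constant `C > 0` such that for integers
`j ≥ a ≥ 1` and `y ∈ [0,1/α]` with `1 - αy ≥ 2/a`,
`|F_j(y) - F_a(y)| ≤ C a^(-α)`. -/
theorem regularized_filling_factor_diff (α : ℝ) (hα0 : 0 < α) (hα1 : α < 1) :
    ∃ C > 0, ∀ j a : ℕ, 1 ≤ a → a ≤ j → ∀ y ∈ Set.Icc 0 (1 / α),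
      2 / (a : ℝ) ≤ 1 - α * y →
      |(1 - α * y) * ((1:ℝ)/j + 1 - α * y) ^ (α - 1) * (1 + (1 - α) * y) ^ (1 - α)
        - (1 - α * y) * ((1:ℝ)/a + 1 - α * y) ^ (α - 1) * (1 + (1 - α) * y) ^ (1 - α)|
        ≤ C * (a : ℝ) ^ (-α) := by
  refine ⟨1 / α, by positivity, ?_⟩
  intro j a ha haj y hy hty
  obtain ⟨hy0, hy1⟩ := hy
  have ha1 : (1:ℝ) ≤ (a:ℝ) := by exact_mod_cast ha
  have ha0 : (0:ℝ) < (a:ℝ) := by linarith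
  have hj0 : (0:ℝ) < (j:ℝ) := lt_of_lt_of_le ha0 (by exact_mod_cast haj)
  set t : ℝ := 1 - α * y with htdef
  have ht0 : 0 < t := lt_of_lt_of_le (by positivity) hty
  have hta : 1 / (a:ℝ) ≤ t := le_trans (by rw [div_le_div_iff₀ ha0 ha0]; nlinarith) hty
  -- the G factor
  set B : ℝ := 1 + (1 - α) * y with hBdef
  have hB1 : 1 ≤ B := by nlinarith
  have hB0 : 0 < B := by linarith
  have hBle : B ≤ 1 / α := by
    have : y ≤ 1 / α := hy1
    have h2 : α * B ≤ 1 := by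
      have : α * ((1 - α) * y) ≤ (1 - α) * 1 := by
        have : α * y ≤ 1 := by
          calc α * y ≤ α * (1/α) := by nlinarith
            _ = 1 := by field_simp
        nlinarith
      nlinarith
    rw [le_div_iff₀ hα0]; linarith
  set G : ℝ := B ^ (1 - α) with hGdef
  have hG0 : 0 < G := Real.rpow_pos_of_pos hB0 _
  have hGle : G ≤ 1 / α := by
    calc G ≤ B ^ (1:ℝ) := Real.rpow_le_rpow_of_exponent_le hB1 (by linarith)
      _ = B := Real.rpow_one B
      _ ≤ 1 / α := hBle
  -- the X factors
  have hjb : 0 < (1:ℝ)/j + t := by positivity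
  have hab : 0 < (1:ℝ)/a + t := by positivity
  set Xj : ℝ := ((1:ℝ)/j + t) ^ (α - 1) with hXj
  set Xa : ℝ := ((1:ℝ)/a + t) ^ (α - 1) with hXa
  have hXja : Xa ≤ Xj := by
    apply Real.rpow_le_rpow_of_nonpos hjb _ (by linarith)
    have : (1:ℝ)/j ≤ 1/a := one_div_le_one_div_of_le ha0 (by exact_mod_cast haj)
    linarith
  have hXjle : Xj ≤ t ^ (α - 1) := by
    apply Real.rpow_le_rpow_of_nonpos ht0 (le_add_of_nonneg_left (by positivity)) (by linarith)
  -- rewrite the LHS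
  have hexpr : (1 - α * y) * ((1:ℝ)/j + 1 - α * y) ^ (α - 1) * (1 + (1 - α) * y) ^ (1 - α)
        - (1 - α * y) * ((1:ℝ)/a + 1 - α * y) ^ (α - 1) * (1 + (1 - α) * y) ^ (1 - α)
      = t * G * (Xj - Xa) := by
    have e1 : (1:ℝ)/j + 1 - α * y = (1:ℝ)/j + t := by rw [htdef]; ring
    have e2 : (1:ℝ)/a + 1 - α * y = (1:ℝ)/a + t := by rw [htdef]; ring
    rw [e1, e2, ← hXj, ← hXa, ← htdef, ← hBdef, ← hGdef]; ring
  rw [hexpr, abs_of_nonneg (mul_nonneg (mul_nonneg ht0.le hG0.le) (sub_nonneg.mpr hXja))]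
  -- core estimate
  have hkey : Xj - Xa ≤ (1 - α) * (1/(a:ℝ)) * t ^ (α - 2) := by
    have h2 : Xa = (t + 1/(a:ℝ)) ^ (α - 1) := by rw [hXa, add_comm]
    have := key_mvt ht0 (by positivity : (0:ℝ) ≤ 1/(a:ℝ)) hα0 hα1
    rw [h2]; linarith
  have htt : t * t ^ (α - 2) = t ^ (α - 1) := by
    nth_rewrite 1 [← Real.rpow_one t]
    rw [← Real.rpow_add ht0]; ring_nf
  have hta' : t ^ (α - 1) ≤ (1/(a:ℝ)) ^ (α - 1) :=
    Real.rpow_le_rpow_of_nonpos (by positivity) hta (by linarith)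
  have hinv : (1/(a:ℝ)) ^ (α - 1) = (a:ℝ) ^ (1 - α) := by
    rw [one_div, Real.inv_rpow ha0.le, ← Real.rpow_neg ha0.le]
    congr 1; ring
  have hfin : (1/(a:ℝ)) * (a:ℝ) ^ (1 - α) = (a:ℝ) ^ (-α) := by
    rw [one_div, ← Real.rpow_neg_one (a:ℝ), ← Real.rpow_add ha0]
    ring_nf
  have hapow : (0:ℝ) < (a:ℝ) ^ (-α) := Real.rpow_pos_of_pos ha0 _
  have htpow2 : (0:ℝ) ≤ t ^ (α - 2) := (Real.rpow_pos_of_pos ht0 _).le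
  calc t * G * (Xj - Xa)
      ≤ t * G * ((1 - α) * (1/(a:ℝ)) * t ^ (α - 2)) := by
        apply mul_le_mul_of_nonneg_left hkey (by positivity)
    _ = G * ((1 - α) * ((1/(a:ℝ)) * (t * t ^ (α - 2)))) := by ring
    _ = G * ((1 - α) * ((1/(a:ℝ)) * t ^ (α - 1))) := by rw [htt]
    _ ≤ (1/α) * ((1 - α) * ((1/(a:ℝ)) * ((1/(a:ℝ)) ^ (α - 1)))) := by
        exact mul_le_mul hGle
          (mul_le_mul_of_nonneg_left (mul_le_mul_of_nonneg_left hta' (by positivity)) (by linarith))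
          (mul_nonneg (by linarith) (by positivity)) (by positivity)
    _ = (1/α) * ((1 - α) * (a:ℝ) ^ (-α)) := by rw [hinv, hfin]
    _ ≤ (1/α) * (a:ℝ) ^ (-α) := by
        have h9 : (1 - α) * (a:ℝ) ^ (-α) ≤ (a:ℝ) ^ (-α) := by nlinarith
        exact mul_le_mul_of_nonneg_left h9 (by positivity)
end
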